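/- arXiv:math/0211195 — 3 statements merged into one kernel-verified Lean document; each statement's English description precedes it below -/
import Mathlib

section
/- For positive reals r_a, r_b, r_c, r_d: if (1/r_a)(1/r_b + 1/r_c + 1/r_d) + (1/r_b)(1/r_a + 1/r_c + 1/r_d) − (1/r_c − 1/r_d)² < 0, then r_a > min{r_c, r_d} and r_b > min{r_c, r_d}. -/
/-- If Ω_{abcd} < 0 then r_a, r_b > min {r_c, r_d}. -/
theorem negative_omega (ra rb rc rd : ℝ) (hra : 0 < ra) (hrb : 0 < rb)
    (hrc : 0 < rc) (hrd : 0 < rd)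
    (h : (1/ra) * (1/rb + 1/rc + 1/rd) + (1/rb) * (1/ra + 1/rc + 1/rd)
        - (1/rc - 1/rd)^2 < 0) :
    min rc rd < ra ∧ min rc rd < rb := by
  have hc := one_div_pos.2 hrc
  have hd := one_div_pos.2 hrd
  have ha := one_div_pos.2 hra
  have hb := one_div_pos.2 hrb
  constructor
  · by_contra hcon
    push_neg at hcon
    have h1 : ra ≤ rc := le_trans hcon (min_le_left _ _)
    have h2 : ra ≤ rd := le_trans hcon (min_le_right _ _)
    have g1 : 1/rc ≤ 1/ra := one_div_le_one_div_of_le hra h1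
    have g2 : 1/rd ≤ 1/ra := one_div_le_one_div_of_le hra h2
    nlinarith [mul_pos hc hd, mul_pos ha hb, mul_pos hb hc, mul_pos hb hd]
  · by_contra hcon
    push_neg at hcon
    have h1 : rb ≤ rc := le_trans hcon (min_le_left _ _)
    have h2 : rb ≤ rd := le_trans hcon (min_le_right _ _)
    have g1 : 1/rc ≤ 1/rb := one_div_le_one_div_of_le hrb h1
    have g2 : 1/rd ≤ 1/rb := one_div_le_one_div_of_le hrb h2
    nlinarith [mul_pos hc hd, mul_pos ha hb, mul_pos ha hc, mul_pos ha hd]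
end

section
/- For positive reals r_i, r_j, r_k, r_ℓ, if r_i = min{r_i, r_j, r_k, r_ℓ} and Q_{ijkℓ} = 0, then 1/r_j + 1/r_k + 1/r_ℓ − 1/r_i < 0. -/
theorem min_weight_degenerate (ri rj rk rl : ℝ) (hi : 0 < ri) (hj : 0 < rj)
    (hk : 0 < rk) (hl : 0 < rl)
    (hmin : ri ≤ rj ∧ ri ≤ rk ∧ ri ≤ rl)
    (hQ : (1/ri + 1/rj + 1/rk + 1/rl)^2
        - 2 * (1/ri^2 + 1/rj^2 + 1/rk^2 + 1/rl^2) = 0) :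
    1/rj + 1/rk + 1/rl - 1/ri < 0 := by
  obtain ⟨h1, h2, h3⟩ := hmin
  set a := 1/ri with ha
  set b := 1/rj with hb
  set c := 1/rk with hc
  set d := 1/rl with hd
  have hba : b ≤ a := one_div_le_one_div_of_le hi h1
  have hca : c ≤ a := one_div_le_one_div_of_le hi h2
  have hda : d ≤ a := one_div_le_one_div_of_le hi h3
  have hbp : 0 < b := by positivity
  have hcp : 0 < c := by positivity
  have hdp : 0 < d := by positivity
  have hap : 0 < a := by positivity
  have hQ' : (a + b + c + d)^2 - 2 * (a^2 + b^2 + c^2 + d^2) = 0 := by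
    have : 1/ri^2 = a^2 := by rw [ha]; ring
    have h2' : 1/rj^2 = b^2 := by rw [hb]; ring
    have h3' : 1/rk^2 = c^2 := by rw [hc]; ring
    have h4' : 1/rl^2 = d^2 := by rw [hd]; ring
    rw [← this, ← h2', ← h3', ← h4']; exact hQ
  by_contra h
  push_neg at h
  nlinarith [mul_nonneg (sub_nonneg.2 hba) hbp.le, mul_nonneg (sub_nonneg.2 hca) hcp.le,
    mul_nonneg (sub_nonneg.2 hda) hdp.le, mul_pos hap hbp, mul_pos hap hcp, mul_pos hap hdp,
    sq_nonneg (b + c + d - a), mul_nonneg (sub_nonneg.2 (by linarith : a ≤ b + c + d)) hap.le]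
end

section
/- For positive reals r_i, r_j, r_k, r_ℓ with r_i ≤ r_j and Q_{ijkℓ} > 0 (Q being the nondegeneracy quadratic), setting P_{abc} = 2(r_a + r_b + r_c), the expression (P_{ℓjk} + 2P_{ℓij})/(r_i r_j) + (P_{ℓjk} + P_{ℓij})/(r_i r_k) + (P_{ℓij} + 2P_{ℓjk})/(r_ℓ r_i) + (2P_{ℓjk} + P_{ℓij})/(r_j r_k) + (P_{ℓij} + P_{ℓjk})/(r_ℓ r_j) + (2P_{ℓij} + P_{ℓjk})/(r_ℓ r_k) − P_{ℓij}/r_i² − (P_{ℓjk} + P_{ℓij})/r_j² − P_{ℓjk}/r_k² is nonnegative. -/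
set_option maxHeartbeats 1000000


/-- The expression with the same sign as Ω_{ℓijk} + Ω_{ℓkij} is nonnegative when
r_i ≤ r_j and the tetrahedron is nondegenerate. Here P_{abc} = 2(r_a+r_b+r_c). -/
theorem omega_sum_expression_nonneg (ri rj rk rl : ℝ) (hi : 0 < ri) (hj : 0 < rj)
    (hk : 0 < rk) (hl : 0 < rl) (hij : ri ≤ rj)
    (hQ : 0 < (1/ri + 1/rj + 1/rk + 1/rl)^2
        - 2 * (1/ri^2 + 1/rj^2 + 1/rk^2 + 1/rl^2)) :
    0 ≤ (2*(rl+rj+rk) + 2 * (2*(rl+ri+rj))) / (ri*rj)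
      + (2*(rl+rj+rk) + 2*(rl+ri+rj)) / (ri*rk)
      + (2*(rl+ri+rj) + 2 * (2*(rl+rj+rk))) / (rl*ri)
      + (2 * (2*(rl+rj+rk)) + 2*(rl+ri+rj)) / (rj*rk)
      + (2*(rl+ri+rj) + 2*(rl+rj+rk)) / (rl*rj)
      + (2 * (2*(rl+ri+rj)) + 2*(rl+rj+rk)) / (rl*rk)
      - 2*(rl+ri+rj) / ri^2 - (2*(rl+rj+rk) + 2*(rl+ri+rj)) / rj^2
      - 2*(rl+rj+rk) / rk^2 := by
  have hQ' : 0 < (rj*rk*rl + ri*rk*rl + ri*rj*rl + ri*rj*rk)^2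
      - 2*((rj*rk*rl)^2 + (ri*rk*rl)^2 + (ri*rj*rl)^2 + (ri*rj*rk)^2) := by
    have h := mul_pos hQ (by positivity : (0:ℝ) < ri^2*rj^2*rk^2*rl^2)
    have e : ((1/ri + 1/rj + 1/rk + 1/rl)^2
        - 2 * (1/ri^2 + 1/rj^2 + 1/rk^2 + 1/rl^2)) * (ri^2*rj^2*rk^2*rl^2)
      = (rj*rk*rl + ri*rk*rl + ri*rj*rl + ri*rj*rk)^2
      - 2*((rj*rk*rl)^2 + (ri*rk*rl)^2 + (ri*rj*rl)^2 + (ri*rj*rk)^2) := by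
      field_simp
    linarith [e ▸ h]
  have h1 : 0 < (2*(rl+ri+rj)) * ((rj*rk*rl + ri*rk*rl + ri*rj*rl + ri*rj*rk)^2
      - 2*((rj*rk*rl)^2 + (ri*rk*rl)^2 + (ri*rj*rl)^2 + (ri*rj*rk)^2)) := by
    have : (0:ℝ) < 2*(rl+ri+rj) := by positivity
    exact mul_pos this hQ'
  have h2 : 0 ≤ (2*(rl+rj+rk)) * ((rj - ri) * (ri*rk^2*rl^2)) := by
    have : (0:ℝ) ≤ rj - ri := by linarith
    positivity
  have h3 : 0 ≤ 2 * ((rk - ri)^2 * (ri*rj^2*rl^2)) := by positivity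
  have h4 : 0 ≤ 2 * ((rj - ri) * (ri^2*rj*rk*rl^2 + ri^2*rj*rk^2*rl)) := by
    have : (0:ℝ) ≤ rj - ri := by linarith
    positivity
  have hW : (0:ℝ) ≤ 2*ri*rj^2*rk^2*rl^2 + 4*ri*rj^2*rk^3*rl + 2*ri*rj^3*rk^2*rl
      + 2*ri^2*rj*rk*rl^3 + 4*ri^2*rj*rk^2*rl^2 + 2*ri^2*rj*rk^3*rl + 2*ri^2*rj^2*rk*rl^2
      + 2*ri^2*rj^3*rk*rl + 2*ri^2*rj^3*rk^2 + 2*ri^3*rj^2*rk^2 := by positivity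
  have key : 0 ≤ (2*(rl+rj+rk) + 2 * (2*(rl+ri+rj))) * (ri*rj*rk^2*rl^2)
      + (2*(rl+rj+rk) + 2*(rl+ri+rj)) * (ri*rj^2*rk*rl^2)
      + (2*(rl+ri+rj) + 2 * (2*(rl+rj+rk))) * (ri*rj^2*rk^2*rl)
      + (2 * (2*(rl+rj+rk)) + 2*(rl+ri+rj)) * (ri^2*rj*rk*rl^2)
      + (2*(rl+ri+rj) + 2*(rl+rj+rk)) * (ri^2*rj*rk^2*rl)
      + (2 * (2*(rl+ri+rj)) + 2*(rl+rj+rk)) * (ri^2*rj^2*rk*rl)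
      - 2*(rl+ri+rj) * (rj^2*rk^2*rl^2)
      - (2*(rl+rj+rk) + 2*(rl+ri+rj)) * (ri^2*rk^2*rl^2)
      - 2*(rl+rj+rk) * (ri^2*rj^2*rl^2) := by nlinarith [h1, h2, h3, h4, hW]
  have e2 : (2*(rl+rj+rk) + 2 * (2*(rl+ri+rj))) / (ri*rj)
      + (2*(rl+rj+rk) + 2*(rl+ri+rj)) / (ri*rk)
      + (2*(rl+ri+rj) + 2 * (2*(rl+rj+rk))) / (rl*ri)
      + (2 * (2*(rl+rj+rk)) + 2*(rl+ri+rj)) / (rj*rk)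
      + (2*(rl+ri+rj) + 2*(rl+rj+rk)) / (rl*rj)
      + (2 * (2*(rl+ri+rj)) + 2*(rl+rj+rk)) / (rl*rk)
      - 2*(rl+ri+rj) / ri^2 - (2*(rl+rj+rk) + 2*(rl+ri+rj)) / rj^2
      - 2*(rl+rj+rk) / rk^2
      = ((2*(rl+rj+rk) + 2 * (2*(rl+ri+rj))) * (ri*rj*rk^2*rl^2)
      + (2*(rl+rj+rk) + 2*(rl+ri+rj)) * (ri*rj^2*rk*rl^2)
      + (2*(rl+ri+rj) + 2 * (2*(rl+rj+rk))) * (ri*rj^2*rk^2*rl)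
      + (2 * (2*(rl+rj+rk)) + 2*(rl+ri+rj)) * (ri^2*rj*rk*rl^2)
      + (2*(rl+ri+rj) + 2*(rl+rj+rk)) * (ri^2*rj*rk^2*rl)
      + (2 * (2*(rl+ri+rj)) + 2*(rl+rj+rk)) * (ri^2*rj^2*rk*rl)
      - 2*(rl+ri+rj) * (rj^2*rk^2*rl^2)
      - (2*(rl+rj+rk) + 2*(rl+ri+rj)) * (ri^2*rk^2*rl^2)
      - 2*(rl+rj+rk) * (ri^2*rj^2*rl^2)) / (ri^2*rj^2*rk^2*rl^2) := by
    field_simp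
  rw [e2]
  exact div_nonneg key (by positivity)
end
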